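/- arXiv:1406.0670 — 2 statements merged into one kernel-verified Lean document; each statement's English description precedes it below -/
import Mathlib

section
/- Every cube occurring as a factor of the infinite Fibonacci word f has order F_n for some n ≥ 4, and conversely for every n ≥ 4 the word f contains a cube of order F_n. Equivalently: for n ≥ 1 there exists an index i with f[i+t] = f[i+n+t] for all 0 ≤ t < 2n if and only if n = F_m for some m ≥ 4. -/
/-- The Fibonacci morphism φ: 0 ↦ 01, 1 ↦ 0. -/
def fibPhi (w : List ℕ) : List ℕ := (w.map (fun c => if c = 0 then [0, 1] else [0])).flatten

/-- The infinite Fibonacci word f = 0100101001001⋯, the fixed point of φ starting with 0. -/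
def fibWord (i : ℕ) : ℕ := ((fibPhi^[i + 2]) [0]).getD i 0

/-- A finite word is a factor of the infinite Fibonacci word. -/
def IsFibFactor (x : List ℕ) : Prop :=
  ∃ i : ℕ, x = (List.range x.length).map (fun t => fibWord (i + t))

/-!
Writing `ψ = (1 - √5) / 2`, the Fibonacci word is the mechanical word
`f i = ⌊(i + 2) ψ⌋ - ⌊(i + 1) ψ⌋ + 1`. A cube of order `n` at `i` forces the carries
`⌊{j ψ} + {n ψ}⌋` to agree for the `2n + 1` indices `i < j ≤ i + 2n + 1`, so these points
`{j ψ}` all miss one of the two arcs into which `1 - {n ψ}` cuts the circle. Any `F (K + 2)`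
consecutive points `{j ψ}` meet every arc of length `|ψ| ^ K` (shifting by `F (K + 1)` moves a
point by `ψ ^ (K + 1)`), so `n ψ` lies within `|ψ| ^ K` of an integer whenever
`F (K + 2) ≤ 2n + 1`. As the Fibonacci numbers are the best approximations of `ψ`,
`|r ψ + q| ≥ |ψ| ^ (k + 1)` for `0 < r < F (k + 2)`, this forces `n = F m`; and `m ≥ 4`, since
for `n = F 2, F 3` the window is long enough to demand `|n ψ + q| < |ψ| ^ m`, while `|ψ| ^ m` is
exactly the best approximation of `F m`. Conversely, `φ^(k + 6)(0)` begins with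
`s_(k+3) s_(k+2) s_(k+2) s_(k+2)`, where `s_k = φ^k(0)` (`fibStd k`) has length `F (k + 2)`.
-/

open Nat (fib)

lemma fibPhi_append (u v : List ℕ) : fibPhi (u ++ v) = fibPhi u ++ fibPhi v := by
  simp [fibPhi]

def fibStd (k : ℕ) : List ℕ := fibPhi^[k] [0]

lemma fibStd_succ (k : ℕ) : fibStd (k + 1) = fibPhi (fibStd k) :=
  Function.iterate_succ_apply' _ _ _

lemma fibStd_add_two (k : ℕ) : fibStd (k + 2) = fibStd (k + 1) ++ fibStd k := by
  induction k with
  | zero => rfl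
  | succ k ih =>
    conv_lhs => rw [fibStd_succ (k + 2), ih, fibPhi_append, ← fibStd_succ, ← fibStd_succ]

lemma length_fibStd (k : ℕ) : (fibStd k).length = fib (k + 2) := by
  induction k using Nat.twoStepInduction with
  | zero => rfl
  | one => rfl
  | more k ih₀ ih₁ =>
    rw [fibStd_add_two, List.length_append, ih₀, ih₁, Nat.fib_add_two (n := k + 2), add_comm]

lemma fibStd_prefix_fibStd_succ (k : ℕ) : fibStd k <+: fibStd (k + 1) := by
  cases k with
  | zero => exact ⟨[1], rfl⟩
  | succ k => rw [fibStd_add_two]; exact List.prefix_append _ _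

lemma fibStd_prefix_of_le {k l : ℕ} (h : k ≤ l) : fibStd k <+: fibStd l := by
  induction h with
  | refl => exact List.prefix_refl _
  | step _ ih => exact ih.trans (fibStd_prefix_fibStd_succ _)

lemma List.IsPrefix.getD_eq {α : Type*} {l l' : List α} (h : l <+: l') {i : ℕ} (hi : i < l.length)
    (d : α) :
    l'.getD i d = l.getD i d := by
  obtain ⟨t, rfl⟩ := h
  exact List.getD_append _ _ _ _ hi

lemma fibWord_eq_getD_fibStd {i k : ℕ} (hi : i < fib (k + 2)) :
    fibWord i = (fibStd k).getD i 0 := by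
  have hi' : i < (fibStd (i + 2)).length := by
    have := Nat.le_fib_add_one (i + 2 + 2); rw [length_fibStd]; omega
  rcases le_total (i + 2) k with h | h
  · exact (fibStd_prefix_of_le h).getD_eq hi' 0 |>.symm
  · exact (fibStd_prefix_of_le h).getD_eq (by rwa [length_fibStd]) 0

lemma fibStd_add_seven (k : ℕ) :
    fibStd (k + 7) = fibStd (k + 4) ++ (fibStd (k + 3) ++ fibStd (k + 3) ++ fibStd (k + 3)) ++
      (fibStd k ++ fibStd (k + 1) ++ fibStd (k + 2) ++ fibStd (k + 3)) := by
  simp only [fibStd_add_two, List.append_assoc]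

lemma fibStd_cube_prefix (k : ℕ) :
    fibStd (k + 3) ++ (fibStd (k + 2) ++ fibStd (k + 2) ++ fibStd (k + 2)) <+: fibStd (k + 6) := by
  cases k with
  | zero => decide
  | succ k => exact ⟨_, (fibStd_add_seven k).symm⟩

lemma List.getD_append_append_self_add_length {α : Type*} {u : List α} {t : ℕ}
    (ht : t < 2 * u.length) (d : α) :
    (u ++ u ++ u).getD t d = (u ++ u ++ u).getD (u.length + t) d := by
  rw [List.getD_append (u ++ u) u d t (by simp; omega), List.append_assoc,
    List.getD_append_right u (u ++ u) d _ (by omega), Nat.add_sub_cancel_left]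

lemma fibWord_cube_of_prefix {w u : List ℕ} {K : ℕ} (h : w ++ (u ++ u ++ u) <+: fibStd K) {t : ℕ}
    (ht : t < 2 * u.length) : fibWord (w.length + t) = fibWord (w.length + u.length + t) := by
  have hlen := h.length_le
  simp only [List.length_append, length_fibStd] at hlen
  have hword : ∀ s < 3 * u.length, fibWord (w.length + s) = (u ++ u ++ u).getD s 0 := by
    intro s hs
    rw [fibWord_eq_getD_fibStd (k := K) (by omega), h.getD_eq (by simp; omega),
      List.getD_append_right _ _ _ _ (by omega), Nat.add_sub_cancel_left]
  rw [add_assoc, hword t (by omega), hword _ (by omega), List.getD_append_append_self_add_length ht]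

theorem fibWord_cube_of_fib (k : ℕ) :
    ∀ t < 2 * fib (k + 4), fibWord (fib (k + 5) + t) = fibWord (fib (k + 5) + fib (k + 4) + t) := by
  intro t ht
  have h := fibWord_cube_of_prefix (fibStd_cube_prefix k) (t := t)
  simp only [length_fibStd] at h
  exact h ht

open Real
open scoped goldenRatio

lemma abs_goldenConj_pos : 0 < |ψ| := abs_pos.2 goldenConj_ne_zero

lemma abs_goldenConj_lt_one : |ψ| < 1 := by
  rw [abs_of_neg goldenConj_neg]; linarith [neg_one_lt_goldenConj]

lemma abs_goldenConj_pow_eq_add (k : ℕ) : |ψ| ^ k = |ψ| ^ (k + 1) + |ψ| ^ (k + 2) := by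
  have h : |ψ| ^ 2 = 1 - |ψ| := by
    rw [sq_abs, goldenConj_sq, abs_of_neg goldenConj_neg]; ring
  rw [pow_add _ k 2, pow_succ, h]; ring

lemma exists_fib_coords (k : ℕ) (r q : ℤ) : ∃ a b : ℤ,
    r = a * fib (k + 1) + b * fib (k + 2) ∧ r * ψ + q = ψ ^ (k + 1) * (a + b * ψ) := by
  induction k with
  | zero => exact ⟨r - q, q, by simp, by push_cast; linear_combination (-q : ℝ) * goldenConj_sq⟩
  | succ k ih =>
    obtain ⟨a, b, hr, hq⟩ := ih
    refine ⟨b - a, a, ?_, ?_⟩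
    · rw [hr, Nat.fib_add_two (n := k + 1)]; push_cast; ring
    · rw [hq]; push_cast; linear_combination (-(a : ℝ) * ψ ^ (k + 1)) * goldenConj_sq

lemma nonneg_of_abs_add_mul_goldenConj_lt_one {a b : ℤ} (hb : 0 < b) (h : |a + b * ψ| < 1) :
    0 ≤ a := by
  have hb' : (0 : ℝ) < b := by exact_mod_cast hb
  have : (-1 : ℝ) < a := by nlinarith [(abs_lt.1 h).1, goldenConj_neg]
  have : (-1 : ℤ) < a := by exact_mod_cast this
  omega

theorem abs_goldenConj_pow_le_abs_mul_add {k r : ℕ} (hr : 0 < r) (hrk : r < fib (k + 2)) (q : ℤ) :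
    |ψ| ^ (k + 1) ≤ |r * ψ + q| := by
  obtain ⟨a, b, hab, hq⟩ := exists_fib_coords k r q
  by_contra! hlt
  have hab1 : |a + b * ψ| < 1 := by
    push_cast at hq
    rw [hq, abs_mul, abs_pow] at hlt
    exact (mul_lt_iff_lt_one_right (pow_pos abs_goldenConj_pos _)).1 hlt
  have hF₁ : (0 : ℤ) ≤ fib (k + 1) := Int.natCast_nonneg _
  have hrk' : (r : ℤ) < fib (k + 2) := by exact_mod_cast hrk
  have hr' : (0 : ℤ) < r := by exact_mod_cast hr
  rcases lt_trichotomy b 0 with hb | rfl | hb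
  · have ha : 0 ≤ -a := nonneg_of_abs_add_mul_goldenConj_lt_one (b := -b) (by omega)
      (by rw [← abs_neg]; push_cast; convert hab1 using 2; ring)
    nlinarith
  · have ha : a = 0 := by
      have h := hab1
      push_cast at h
      rw [zero_mul, add_zero, ← Int.cast_abs] at h
      exact Int.abs_lt_one_iff.1 (by exact_mod_cast h)
    subst ha
    simp only [zero_mul, add_zero] at hab
    omega
  · have ha := nonneg_of_abs_add_mul_goldenConj_lt_one hb hab1
    nlinarith

lemma abs_add_neg_floor (x : ℝ) : |x + ((-⌊x⌋ : ℤ) : ℝ)| = Int.fract x := by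
  rw [Int.cast_neg, ← sub_eq_add_neg, Int.self_sub_floor, abs_of_nonneg (Int.fract_nonneg x)]

lemma abs_add_neg_floor_sub_one (x : ℝ) : |x + ((-⌊x⌋ - 1 : ℤ) : ℝ)| = 1 - Int.fract x := by
  have e : x + ((-⌊x⌋ - 1 : ℤ) : ℝ) = -(1 - Int.fract x) := by
    push_cast; rw [← Int.self_sub_floor]; ring
  rw [e, abs_neg, abs_of_pos (sub_pos.2 (Int.fract_lt_one x))]

lemma floor_add_eq_floor_of_abs_le {x ε : ℝ} (h : ∀ q : ℤ, |ε| ≤ |x + q|)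
    (hne : ∀ q : ℤ, x + ε ≠ q) : ⌊x + ε⌋ = ⌊x⌋ := by
  have h₀ := h (-⌊x⌋)
  have h₁ := h (-⌊x⌋ - 1)
  rw [abs_add_neg_floor] at h₀
  rw [abs_add_neg_floor_sub_one] at h₁
  have hx := Int.floor_add_fract x
  rw [Int.floor_eq_iff]
  refine ⟨by linarith [neg_abs_le ε], lt_of_le_of_ne (by linarith [le_abs_self ε]) ?_⟩
  exact_mod_cast hne (⌊x⌋ + 1)

theorem floor_fib_add_mul_goldenConj {k r : ℕ} (hr : 0 < r) (hrk : r < fib (k + 2)) :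
    ⌊((fib (k + 1) + r : ℕ) : ℝ) * ψ⌋ = ⌊(r : ℝ) * ψ⌋ - fib k := by
  have hfib := goldenConj_mul_fib_succ_add_fib k
  have e : ((fib (k + 1) + r : ℕ) : ℝ) * ψ = (r * ψ + ψ ^ (k + 1)) - fib k := by
    push_cast; linarith
  rw [e, Int.floor_sub_natCast]
  congr 1
  refine floor_add_eq_floor_of_abs_le (fun q => ?_) (fun q hq => ?_)
  · rw [abs_pow]; exact abs_goldenConj_pow_le_abs_mul_add hr hrk q
  -- the bound above is attained at `r = F (k + 1)`; irrationality keeps `r ψ + ψ ^ (k + 1) ∉ ℤ`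
  · exact (goldenConj_irrational.intCast_mul (m := r + fib (k + 1)) (by omega)).ne_int (q - fib k)
      (by push_cast; linarith)

lemma floor_goldenConj_mul_one_two_three :
    ⌊((1 : ℕ) : ℝ) * ψ⌋ = -1 ∧ ⌊((2 : ℕ) : ℝ) * ψ⌋ = -2 ∧ ⌊((3 : ℕ) : ℝ) * ψ⌋ = -2 := by
  have h₁ : 2 < √5 := by rw [Real.lt_sqrt] <;> norm_num
  have h₂ : √5 < 7 / 3 := by rw [Real.sqrt_lt'] <;> norm_num
  simp only [Int.floor_eq_iff, goldenConj]
  push_cast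
  refine ⟨⟨?_, ?_⟩, ⟨?_, ?_⟩, ⟨?_, ?_⟩⟩ <;> linarith

theorem fibStd_getD_eq_floor (k : ℕ) {i : ℕ} (hi : i < fib (k + 2)) :
    ((fibStd k).getD i 0 : ℤ) = ⌊((i + 2 : ℕ) : ℝ) * ψ⌋ - ⌊((i + 1 : ℕ) : ℝ) * ψ⌋ + 1 := by
  obtain ⟨f₁, f₂, f₃⟩ := floor_goldenConj_mul_one_two_three
  induction k using Nat.twoStepInduction generalizing i with
  | zero =>
    obtain rfl : i = 0 := by simpa using hi
    rw [f₂, f₁]; rfl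
  | one =>
    obtain rfl | rfl : i = 0 ∨ i = 1 := by change i < 2 at hi; omega
    · rw [f₂, f₁]; rfl
    · rw [f₃, f₂]; rfl
  | more k ih₀ ih₁ =>
    simp only [Nat.add_assoc, Nat.reduceAdd] at hi ih₁
    have hlen : (fibStd (k + 1)).length = fib (k + 3) := length_fibStd _
    rw [fibStd_add_two]
    rcases lt_or_ge i (fib (k + 3)) with h | h
    · rw [List.getD_append _ _ _ _ (by omega)]
      exact ih₁ h
    · obtain ⟨j, rfl⟩ : ∃ j, i = fib (k + 3) + j := ⟨i - fib (k + 3), by omega⟩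
      have hfib₄ : fib (k + 4) = fib (k + 2) + fib (k + 3) := Nat.fib_add_two
      have hfib₃ : fib 3 ≤ fib (k + 3) := Nat.fib_mono (by omega)
      change 2 ≤ _ at hfib₃
      have hj : j < fib (k + 2) := by omega
      rw [List.getD_append_right _ _ _ _ (by omega), hlen, Nat.add_sub_cancel_left, ih₀ hj,
        show fib (k + 3) + j + 2 = fib (k + 3) + (j + 2) by omega,
        show fib (k + 3) + j + 1 = fib (k + 3) + (j + 1) by omega,
        floor_fib_add_mul_goldenConj (k := k + 2) (by omega) (show j + 2 < fib (k + 4) by omega),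
        floor_fib_add_mul_goldenConj (k := k + 2) (by omega) (show j + 1 < fib (k + 4) by omega)]
      ring

theorem fibWord_eq_floor (i : ℕ) :
    (fibWord i : ℤ) = ⌊((i + 2 : ℕ) : ℝ) * ψ⌋ - ⌊((i + 1 : ℕ) : ℝ) * ψ⌋ + 1 := by
  have hi : i < fib (i + 2) := by have := Nat.le_fib_add_one (i + 2); omega
  rw [fibWord_eq_getD_fibStd hi, fibStd_getD_eq_floor i hi]

theorem exists_mul_goldenConj_add_mem_Ico (K : ℕ) (x : ℝ) (i : ℕ) :
    ∃ j, i ≤ j ∧ j < i + fib (K + 2) ∧ ∃ q : ℤ, x ≤ j * ψ + q ∧ j * ψ + q < x + |ψ| ^ K := by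
  induction K generalizing x with
  | zero =>
    refine ⟨i, le_rfl, by simp, -⌊i * ψ - x⌋, ?_, ?_⟩ <;> push_cast <;>
      linarith [Int.floor_le (i * ψ - x), Int.lt_floor_add_one (i * ψ - x)]
  | succ K ih =>
    have hfib : fib (K + 1 + 2) = fib (K + 1) + fib (K + 2) := Nat.fib_add_two
    have hshift : ∀ (j : ℕ) (q : ℤ),
        ((j + fib (K + 1) : ℕ) : ℝ) * ψ + ((q + fib K : ℤ) : ℝ) = j * ψ + q + ψ ^ (K + 1) := by
      intro j q; push_cast; linear_combination goldenConj_mul_fib_succ_add_fib K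
    have hsplit := abs_goldenConj_pow_eq_add K
    have hlt : |ψ| ^ (K + 2) < |ψ| ^ (K + 1) :=
      pow_lt_pow_right_of_lt_one₀ abs_goldenConj_pos abs_goldenConj_lt_one (by omega)
    rcases le_total 0 (ψ ^ (K + 1)) with hpos | hneg
    · have hψ : ψ ^ (K + 1) = |ψ| ^ (K + 1) := by rw [← abs_pow, abs_of_nonneg hpos]
      obtain ⟨j, hij, hj, q, h₁, h₂⟩ := ih (x - |ψ| ^ (K + 2))
      by_cases hx : x ≤ j * ψ + q
      · exact ⟨j, hij, by omega, q, hx, by linarith⟩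
      · refine ⟨j + fib (K + 1), by omega, by omega, q + fib K, ?_, ?_⟩ <;> rw [hshift] <;> linarith
    · have hψ : ψ ^ (K + 1) = -|ψ| ^ (K + 1) := by rw [← abs_pow, abs_of_nonpos hneg, neg_neg]
      obtain ⟨j, hij, hj, q, h₁, h₂⟩ := ih x
      by_cases hx : j * ψ + q < x + |ψ| ^ (K + 1)
      · exact ⟨j, hij, by omega, q, h₁, hx⟩
      · refine ⟨j + fib (K + 1), by omega, by omega, q + fib K, ?_, ?_⟩ <;> rw [hshift] <;> linarith

lemma exists_fract_mul_goldenConj_mem_Ico (K : ℕ) {x : ℝ} (hx₀ : 0 ≤ x) (hx₁ : x + |ψ| ^ K ≤ 1)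
    (i : ℕ) : ∃ j, i ≤ j ∧ j < i + fib (K + 2) ∧
      x ≤ Int.fract (j * ψ) ∧ Int.fract (j * ψ) < x + |ψ| ^ K := by
  obtain ⟨j, hij, hj, q, h₁, h₂⟩ := exists_mul_goldenConj_add_mem_Ico K x i
  have hfract : Int.fract (j * ψ) = j * ψ + q :=
    Int.fract_eq_iff.2 ⟨by linarith, by linarith, -q, by push_cast; ring⟩
  exact ⟨j, hij, hj, hfract ▸ h₁, hfract ▸ h₂⟩

lemma floor_add_eq_add_floor_fract_add_fract (x y : ℝ) :
    ⌊x + y⌋ = ⌊x⌋ + ⌊y⌋ + ⌊Int.fract x + Int.fract y⌋ := by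
  have e : x + y = ((⌊x⌋ + ⌊y⌋ : ℤ) : ℝ) + (Int.fract x + Int.fract y) := by
    push_cast; linarith [Int.floor_add_fract x, Int.floor_add_fract y]
  rw [e, Int.floor_intCast_add]

theorem floor_fract_add_fract_eq_of_cube {n i : ℕ}
    (hcube : ∀ t < 2 * n, fibWord (i + t) = fibWord (i + n + t)) {s : ℕ} (hs : s ≤ 2 * n) :
    ⌊Int.fract (((i + 1 + s : ℕ) : ℝ) * ψ) + Int.fract ((n : ℝ) * ψ)⌋ =
      ⌊Int.fract (((i + 1 : ℕ) : ℝ) * ψ) + Int.fract ((n : ℝ) * ψ)⌋ := by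
  have hadd (j : ℕ) : ⌊((j + n : ℕ) : ℝ) * ψ⌋ =
      ⌊(j : ℝ) * ψ⌋ + ⌊(n : ℝ) * ψ⌋ + ⌊Int.fract ((j : ℝ) * ψ) + Int.fract ((n : ℝ) * ψ)⌋ := by
    rw [← floor_add_eq_add_floor_fract_add_fract]; push_cast; ring_nf
  induction s with
  | zero => rfl
  | succ s ih =>
    have h := congrArg (Nat.cast : ℕ → ℤ) (hcube s (by omega))
    rw [fibWord_eq_floor, fibWord_eq_floor, show i + n + s + 2 = i + 1 + (s + 1) + n by omega,
      show i + n + s + 1 = i + 1 + s + n by omega, hadd, hadd,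
      show i + s + 2 = i + 1 + (s + 1) by omega, show i + s + 1 = i + 1 + s by omega] at h
    rw [← ih (by omega)]
    omega

theorem exists_abs_mul_goldenConj_add_lt_of_cube {n i K : ℕ}
    (hcube : ∀ t < 2 * n, fibWord (i + t) = fibWord (i + n + t)) (hK : fib (K + 2) ≤ 2 * n + 1) :
    ∃ q : ℤ, |n * ψ + q| < |ψ| ^ K := by
  set θ := Int.fract ((n : ℝ) * ψ)
  by_contra! h
  have hθ₀ := h (-⌊(n : ℝ) * ψ⌋)
  have hθ₁ := h (-⌊(n : ℝ) * ψ⌋ - 1)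
  rw [abs_add_neg_floor] at hθ₀
  rw [abs_add_neg_floor_sub_one] at hθ₁
  have hθ : θ < 1 := Int.fract_lt_one _
  have hcarry (j : ℕ) (hj : i + 1 ≤ j) (hj' : j < i + 1 + fib (K + 2)) :=
    floor_fract_add_fract_eq_of_cube hcube (s := j - (i + 1)) (by omega)
  obtain ⟨j₁, hj₁, hj₁', h₁, h₁'⟩ :=
    exists_fract_mul_goldenConj_mem_Ico K (x := 1 - θ) (by linarith) (by linarith) (i + 1)
  obtain ⟨j₀, hj₀, hj₀', h₀, h₀'⟩ :=
    exists_fract_mul_goldenConj_mem_Ico K (x := 0) le_rfl (by linarith) (i + 1)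
  have c₁ : ⌊Int.fract ((j₁ : ℝ) * ψ) + θ⌋ = 1 := by
    rw [Int.floor_eq_iff]; push_cast; constructor <;> linarith [Int.fract_lt_one ((j₁ : ℝ) * ψ)]
  have c₀ : ⌊Int.fract ((j₀ : ℝ) * ψ) + θ⌋ = 0 := by
    rw [Int.floor_eq_iff]; push_cast; constructor <;> linarith [Int.fract_nonneg ((j₀ : ℝ) * ψ)]
  have e₁ := hcarry j₁ hj₁ hj₁'
  have e₀ := hcarry j₀ hj₀ hj₀'
  rw [show i + 1 + (j₁ - (i + 1)) = j₁ by omega, c₁] at e₁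
  rw [show i + 1 + (j₀ - (i + 1)) = j₀ by omega, c₀] at e₀
  omega

lemma eq_fib_of_abs_mul_goldenConj_add_lt {n k : ℕ} {q : ℤ} (hlo : fib (k + 2) ≤ n)
    (hhi : n < fib (k + 3)) (h : |n * ψ + q| < |ψ| ^ (k + 1)) : n = fib (k + 2) := by
  by_contra hne
  have hk : k ≠ 0 := by
    rintro rfl; change 1 ≤ n at hlo; change n < 2 at hhi; change ¬n = 1 at hne; omega
  obtain ⟨k, rfl⟩ : ∃ k', k = k' + 1 := ⟨k - 1, by omega⟩
  have hfib : fib (k + 4) = fib (k + 2) + fib (k + 3) := Nat.fib_add_two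
  simp only [Nat.add_assoc, Nat.reduceAdd] at hlo hhi h hne
  obtain ⟨d, rfl⟩ : ∃ d, n = fib (k + 3) + d := ⟨n - fib (k + 3), by omega⟩
  have hd :=
    abs_goldenConj_pow_le_abs_mul_add (k := k) (r := d) (by omega) (by omega) (q - fib (k + 2))
  have hψ : ψ * fib (k + 3) + fib (k + 2) = ψ ^ (k + 3) := goldenConj_mul_fib_succ_add_fib (k + 2)
  have e : (d : ℝ) * ψ + ((q - fib (k + 2) : ℤ) : ℝ) =
      ((fib (k + 3) + d : ℕ) : ℝ) * ψ + q - ψ ^ (k + 3) := by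
    push_cast; linear_combination -hψ
  have hsplit : |ψ| ^ (k + 1) = |ψ| ^ (k + 2) + |ψ| ^ (k + 3) := abs_goldenConj_pow_eq_add (k + 1)
  rw [e] at hd
  have := abs_sub (((fib (k + 3) + d : ℕ) : ℝ) * ψ + q) (ψ ^ (k + 3))
  rw [abs_pow] at this
  linarith

theorem exists_eq_fib_of_forall_exists_abs_lt {n : ℕ} (hn : 1 ≤ n)
    (h : ∀ K, fib (K + 2) ≤ 2 * n + 1 → ∃ q : ℤ, |n * ψ + q| < |ψ| ^ K) :
    ∃ m, 4 ≤ m ∧ n = fib m := by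
  obtain ⟨k, hk⟩ : ∃ k, Nat.greatestFib n = k + 2 :=
    ⟨Nat.greatestFib n - 2, by have : 2 ≤ Nat.greatestFib n := Nat.le_greatestFib.2 hn; omega⟩
  have hlo : fib (k + 2) ≤ n := hk ▸ Nat.fib_greatestFib_le n
  have hhi : n < fib (k + 3) := by simpa [hk] using Nat.lt_fib_greatestFib_add_one n
  have hfib : fib (k + 3) = fib (k + 1) + fib (k + 2) := Nat.fib_add_two
  obtain ⟨q, hq⟩ := h (k + 1) <| show fib (k + 3) ≤ 2 * n + 1 by
    have := Nat.fib_mono (show k + 1 ≤ k + 2 by omega); omega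
  have hn_eq := eq_fib_of_abs_mul_goldenConj_add_lt hlo hhi hq
  refine ⟨k + 2, ?_, hn_eq⟩
  by_contra! hk2
  obtain ⟨q', hq'⟩ := h (k + 2) <| by
    have : k ≤ 1 := by omega
    subst hn_eq; interval_cases k <;> decide
  have : |ψ| ^ (k + 2) ≤ |n * ψ + q'| :=
    abs_goldenConj_pow_le_abs_mul_add (k := k + 1) (by omega) hhi q'
  linarith

/-- For n ≥ 1, the Fibonacci word contains a cube of order n iff n is a
Fibonacci number F_m with m ≥ 4. -/
theorem fibWord_cube_orders :
    ∀ n : ℕ, 1 ≤ n →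
      ((∃ i : ℕ, ∀ t < 2 * n, fibWord (i + t) = fibWord (i + n + t)) ↔
        ∃ m : ℕ, 4 ≤ m ∧ n = Nat.fib m) := by
  intro n hn
  constructor
  · rintro ⟨i, hcube⟩
    exact exists_eq_fib_of_forall_exists_abs_lt hn fun K hK =>
      exists_abs_mul_goldenConj_add_lt_of_cube hcube hK
  · rintro ⟨m, hm, rfl⟩
    obtain ⟨k, rfl⟩ : ∃ k, m = k + 4 := ⟨m - 4, by omega⟩
    exact ⟨fib (k + 5), fibWord_cube_of_fib k⟩
end

section
/- The prefix f[0..n-1] of the infinite Fibonacci word f of length n is a palindrome if and only if n = F_i − 2 for some i ≥ 3. -/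
/-- The prefix of the Fibonacci word of length n. -/
def fibPrefix (n : ℕ) : List ℕ := (List.range n).map fibWord

namespace FibAux

lemma fibPhi_append (u v : List ℕ) : fibPhi (u ++ v) = fibPhi u ++ fibPhi v := by
  simp [fibPhi]

lemma fibPhi_cons (a : ℕ) (v : List ℕ) :
    fibPhi (a :: v) = (if a = 0 then [0,1] else [0]) ++ fibPhi v := by
  simp [fibPhi]

/-- iterates of φ on [0] -/
def W (k : ℕ) : List ℕ := fibPhi^[k] [0]

lemma W_succ (k : ℕ) : W (k+1) = fibPhi (W k) := Function.iterate_succ_apply' _ _ _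

lemma length_fibPhi (w : List ℕ) : (fibPhi w).length = w.length + w.count 0 := by
  induction w with
  | nil => simp [fibPhi]
  | cons a v ih =>
    rw [fibPhi_cons, List.length_append, ih]
    by_cases h : a = 0 <;> simp [h, List.count_cons] <;> omega

lemma count_fibPhi (w : List ℕ) : (fibPhi w).count 0 = w.length := by
  induction w with
  | nil => simp [fibPhi]
  | cons a v ih =>
    rw [fibPhi_cons, List.count_append, ih]
    by_cases h : a = 0 <;> simp [h] <;> omega

lemma length_count_W (k : ℕ) :
    (W k).length = Nat.fib (k+2) ∧ (W k).count 0 = Nat.fib (k+1) := by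
  induction k with
  | zero => simp [W]
  | succ k ih =>
    rw [W_succ, length_fibPhi, count_fibPhi, ih.1, ih.2]
    have hf : Nat.fib (k+1+2) = Nat.fib (k+2) + Nat.fib (k+1) := by
      rw [Nat.fib_add_two, show k+1+1 = k+2 from rfl]; omega
    exact ⟨by omega, rfl⟩

lemma length_W (k : ℕ) : (W k).length = Nat.fib (k+2) := (length_count_W k).1

lemma fibPhi_prefix_mono {u v : List ℕ} (h : u <+: v) : fibPhi u <+: fibPhi v := by
  obtain ⟨t, rfl⟩ := h
  rw [fibPhi_append]; exact List.prefix_append _ _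

lemma W_prefix_succ (k : ℕ) : W k <+: W (k+1) := by
  induction k with
  | zero => exact ⟨[1], rfl⟩
  | succ k ih =>
    rw [W_succ, W_succ]
    exact fibPhi_prefix_mono ih

lemma W_prefix_mono {k l : ℕ} (h : k ≤ l) : W k <+: W l := by
  induction l with
  | zero => simp_all
  | succ l ih =>
    rcases Nat.lt_or_ge k (l+1) with h' | h'
    · exact (ih (by omega)).trans (W_prefix_succ l)
    · have : k = l + 1 := by omega
      subst this; rfl

lemma fib_lb : ∀ n : ℕ, n + 1 ≤ Nat.fib (n + 2) := by
  intro n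
  induction n using Nat.twoStepInduction with
  | zero => decide
  | one => decide
  | more n ih1 ih2 =>
    have h1 : Nat.fib (n+2+2) = Nat.fib (n+2) + Nat.fib (n+2+1) := Nat.fib_add_two
    have h2 : Nat.fib (n+2+1) = Nat.fib (n+1+2) := rfl
    omega

lemma getElem_W {k i : ℕ} (h : i < (W k).length) : (W k)[i] = fibWord i := by
  have hi2 : i < (W (i + 2)).length := by
    rw [length_W]; have := fib_lb (i + 2); omega
  have hK1 : W k <+: W (max k (i+2)) := W_prefix_mono (le_max_left _ _)
  have hK2 : W (i+2) <+: W (max k (i+2)) := W_prefix_mono (le_max_right _ _)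
  rw [hK1.getElem h]
  rw [show fibWord i = (W (i+2)).getD i 0 from rfl, List.getD_eq_getElem _ _ hi2]
  rw [hK2.getElem hi2]

@[simp] lemma length_fibPrefix (n : ℕ) : (fibPrefix n).length = n := by simp [fibPrefix]

@[simp] lemma getElem_fibPrefix {n i : ℕ} (h : i < (fibPrefix n).length) :
    (fibPrefix n)[i] = fibWord i := by
  simp [fibPrefix] at h ⊢

lemma fibPrefix_eq_take {n k : ℕ} (h : n ≤ Nat.fib (k+2)) :
    fibPrefix n = (W k).take n := by
  apply List.ext_getElem
  · simp [length_W, h]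
  · intro i h1 h2
    rw [getElem_fibPrefix h1, List.getElem_take]
    exact (getElem_W _).symm

lemma prefix_W_eq {u : List ℕ} {k : ℕ} (h : u <+: W k) : u = fibPrefix u.length := by
  have hl : u.length ≤ Nat.fib (k+2) := by
    have := h.length_le; rwa [length_W] at this
  rw [fibPrefix_eq_take hl]
  exact List.prefix_iff_eq_take.mp h

lemma fibPrefix_prefix_W (m : ℕ) : fibPrefix m <+: W m := by
  rw [fibPrefix_eq_take (by have := fib_lb m; omega : m ≤ Nat.fib (m+2))]
  exact List.take_prefix _ _

/-- ψ m = length of φ(prefix m) -/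
def psi (m : ℕ) : ℕ := (fibPhi (fibPrefix m)).length

lemma psi_zero : psi 0 = 0 := by simp [psi, fibPrefix, fibPhi]

lemma psi_eq (m : ℕ) : psi m = m + (fibPrefix m).count 0 := by
  rw [psi, length_fibPhi, length_fibPrefix]

lemma le_psi (m : ℕ) : m ≤ psi m := by rw [psi_eq]; omega

lemma phi_fibPrefix (m : ℕ) : fibPhi (fibPrefix m) = fibPrefix (psi m) := by
  have h1 : fibPhi (fibPrefix m) <+: W (m+1) := by
    rw [W_succ]; exact fibPhi_prefix_mono (fibPrefix_prefix_W m)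
  exact prefix_W_eq h1

lemma fibPrefix_succ (n : ℕ) : fibPrefix (n+1) = fibPrefix n ++ [fibWord n] := by
  simp [fibPrefix, List.range_succ]

lemma psi_succ (m : ℕ) :
    psi (m+1) = psi m + (if fibWord m = 0 then 2 else 1) := by
  rw [psi, fibPrefix_succ, fibPhi_append, List.length_append, ← psi]
  congr 1
  by_cases h : fibWord m = 0 <;> simp [fibPhi, h]

lemma fibWord_psi (m : ℕ) : fibWord (psi m) = 0 := by
  have e : fibPhi (fibPrefix (m+1)) = fibPrefix (psi (m+1)) := phi_fibPrefix (m+1)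
  rw [fibPrefix_succ, fibPhi_append, phi_fibPrefix] at e
  have hb : ∃ r, fibPhi [fibWord m] = 0 :: r := by
    by_cases h : fibWord m = 0
    · exact ⟨[1], by simp [fibPhi, h]⟩
    · exact ⟨[], by simp [fibPhi, h]⟩
  obtain ⟨r, hr⟩ := hb
  rw [hr] at e
  have hlt : psi m < psi (m+1) := by rw [psi_succ]; split <;> omega
  have hlen : psi m < (fibPrefix (psi (m+1))).length := by simpa using hlt
  have hw : fibWord (psi m) = (fibPrefix (psi (m+1))).getD (psi m) 0 := by
    rw [List.getD_eq_getElem _ _ hlen, getElem_fibPrefix hlen]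
  rw [hw, ← e, List.getD_append_right _ _ _ _ (by simp)]
  simp

lemma fibPrefix_psi_succ (m : ℕ) :
    fibPrefix (psi m + 1) = fibPhi (fibPrefix m) ++ [0] := by
  rw [fibPrefix_succ, fibWord_psi, phi_fibPrefix]

lemma psi_psi (m : ℕ) : psi (psi m + 1) = psi m + m + 2 := by
  rw [psi, fibPrefix_psi_succ, fibPhi_append, List.length_append, length_fibPhi,
    count_fibPhi, length_fibPrefix, ← psi]
  rfl

/-- key reversal identity: (φ(w) ++ [0]).reverse = φ(w.reverse) ++ [0] -/
lemma rev_phi (w : List ℕ) :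
    (fibPhi w ++ [0]).reverse = fibPhi w.reverse ++ [0] := by
  induction w with
  | nil => rfl
  | cons a v ih =>
    rw [fibPhi_cons, List.reverse_cons, fibPhi_append, List.append_assoc,
      List.reverse_append, ih]
    by_cases h : a = 0 <;> simp [fibPhi, h]

lemma phi_ne_one_cons (w r : List ℕ) : fibPhi w ≠ 1 :: r := by
  cases w with
  | nil => simp [fibPhi]
  | cons a v =>
    rw [fibPhi_cons]
    by_cases h : a = 0 <;> simp [h]

lemma phi_inj : ∀ x y : List ℕ, (∀ c ∈ x, c = 0 ∨ c = 1) → (∀ c ∈ y, c = 0 ∨ c = 1) →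
    fibPhi x = fibPhi y → x = y := by
  intro x
  induction x with
  | nil =>
    intro y _ _ h
    cases y with
    | nil => rfl
    | cons b t =>
      rw [fibPhi_cons] at h
      by_cases hb : b = 0 <;> simp [hb, fibPhi] at h
  | cons a v ih =>
    intro y hx hy h
    cases y with
    | nil =>
      rw [fibPhi_cons] at h
      by_cases ha : a = 0 <;> simp [ha, fibPhi] at h
    | cons b t =>
      rcases hx a (by simp) with ha | ha <;> rcases hy b (by simp) with hb | hb <;>
        subst ha <;> subst hb <;> rw [fibPhi_cons, fibPhi_cons] at h <;> simp at h
      · rw [ih t (fun c hc => hx c (by simp [hc])) (fun c hc => hy c (by simp [hc])) h]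
      · exact absurd h.symm (phi_ne_one_cons t _)
      · exact absurd h (phi_ne_one_cons v _)
      · rw [ih t (fun c hc => hx c (by simp [hc])) (fun c hc => hy c (by simp [hc])) h]

lemma mem_fibPhi {c : ℕ} {w : List ℕ} (h : c ∈ fibPhi w) : c = 0 ∨ c = 1 := by
  rw [fibPhi] at h
  simp only [List.mem_flatten, List.mem_map] at h
  obtain ⟨l, ⟨a, _, rfl⟩, hcl⟩ := h
  by_cases ha : a = 0 <;> simp [ha] at hcl <;> tauto

lemma fibWord_letter (i : ℕ) : fibWord i = 0 ∨ fibWord i = 1 := by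
  have hi2 : i < (W (i + 2)).length := by
    rw [length_W]; have := fib_lb (i + 2); omega
  rw [← getElem_W hi2]
  have hmem : (W (i+2))[i] ∈ fibPhi (W (i+1)) := by
    rw [← W_succ]; exact List.getElem_mem _
  exact mem_fibPhi hmem

lemma mem_fibPrefix_letter {c : ℕ} {m : ℕ} (h : c ∈ fibPrefix m) : c = 0 ∨ c = 1 := by
  simp only [fibPrefix, List.mem_map, List.mem_range] at h
  obtain ⟨i, _, rfl⟩ := h
  exact fibWord_letter i

/-- forward palindrome step -/
lemma pal_step {m : ℕ} (h : (fibPrefix m).reverse = fibPrefix m) :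
    (fibPrefix (psi m + 1)).reverse = fibPrefix (psi m + 1) := by
  rw [fibPrefix_psi_succ, rev_phi, h]

lemma exists_block (j : ℕ) : ∃ m, psi m ≤ j ∧ j < psi (m+1) := by
  induction j with
  | zero =>
    refine ⟨0, le_refl _, ?_⟩
    have h0 := psi_zero
    rw [psi_succ]
    split <;> omega
  | succ j ih =>
    obtain ⟨m, h1, h2⟩ := ih
    rcases Nat.lt_or_ge (j+1) (psi (m+1)) with h | h
    · exact ⟨m, by omega, h⟩
    · refine ⟨m+1, h, ?_⟩
      have h3 : psi (m+1) < psi (m+1+1) := by rw [psi_succ (m+1)]; split <;> omega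
      omega

lemma one_pos {j : ℕ} (h : fibWord j = 1) : ∃ m, j + 1 = psi m := by
  obtain ⟨m, h1, h2⟩ := exists_block j
  rcases Nat.eq_or_lt_of_le h1 with he | hlt
  · rw [← he, fibWord_psi] at h; omega
  · have hs : psi (m+1) ≤ psi m + 2 := by rw [psi_succ]; split <;> omega
    exact ⟨m+1, by omega⟩

/-- converse palindrome step -/
lemma pal_down {n : ℕ} (h2 : 2 ≤ n) (h : (fibPrefix n).reverse = fibPrefix n) :
    ∃ m, m < n ∧ (fibPrefix m).reverse = fibPrefix m ∧ n = psi m + 1 := by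
  have hl : (fibPrefix n).length = n := length_fibPrefix n
  have hr1 : n - 2 < (fibPrefix n).reverse.length := by simp; omega
  have hr2 : n - 2 < (fibPrefix n).length := by simp; omega
  have hr3 : 1 < (fibPrefix n).length := by simp; omega
  have e1 : fibWord (n - 2) = 1 := by
    have g1 : (fibPrefix n).getD (n-2) 0 = fibWord (n-2) := by
      rw [List.getD_eq_getElem _ _ hr2, getElem_fibPrefix hr2]
    have g2 : (fibPrefix n).reverse.getD (n-2) 0 = (fibPrefix n).getD (n-2) 0 := by rw [h]
    have g3 : (fibPrefix n).reverse.getD (n-2) 0 = (fibPrefix n).getD 1 0 := by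
      rw [List.getD_eq_getElem _ _ hr1, List.getElem_reverse,
        ← List.getD_eq_getElem (fibPrefix n) 0]
      rw [show (fibPrefix n).length - 1 - (n-2) = 1 by simp; omega]
    have g4 : (fibPrefix n).getD 1 0 = fibWord 1 := by
      rw [List.getD_eq_getElem _ _ hr3, getElem_fibPrefix hr3]
    have g5 : fibWord 1 = 1 := rfl
    omega
  obtain ⟨m, hm⟩ := one_pos e1
  have hn : n = psi m + 1 := by omega
  have hmn : m < n := by have := le_psi m; omega
  refine ⟨m, hmn, ?_, hn⟩
  rw [hn, fibPrefix_psi_succ, rev_phi] at h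
  have hphi := List.append_inj_left' h rfl
  exact phi_inj _ _
    (fun c hc => mem_fibPrefix_letter (List.mem_reverse.mp hc))
    (fun c hc => mem_fibPrefix_letter hc) hphi

/-- the orbit of palindromic prefix lengths -/
def A : ℕ → ℕ
  | 0 => 0
  | (i+1) => psi (A i) + 1

lemma A_fib : ∀ i, A i + 2 = Nat.fib (i + 3) := by
  intro i
  induction i using Nat.twoStepInduction with
  | zero => decide
  | one =>
    have h1 : A 1 = 1 := by show psi (A 0) + 1 = 1; rw [show A 0 = 0 from rfl, psi_zero]
    rw [h1]; decide
  | more i ih1 ih2 =>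
    have e3 := psi_psi (A i)
    have hA2 : A (i+2) = psi (A (i+1)) + 1 := rfl
    have hA1 : A (i+1) = psi (A i) + 1 := rfl
    have hf : Nat.fib (i+2+3) = Nat.fib (i+1+3) + Nat.fib (i+3) := by
      rw [show i+2+3 = (i+3)+2 from by omega, Nat.fib_add_two,
        show i+3+1 = i+1+3 from by omega]
      omega
    rw [hA2, hA1]
    rw [hA1] at ih2
    omega

lemma A_pal : ∀ i, (fibPrefix (A i)).reverse = fibPrefix (A i) := by
  intro i
  induction i with
  | zero => rfl
  | succ i ih => exact pal_step ih

lemma pal_to_A : ∀ n, (fibPrefix n).reverse = fibPrefix n → ∃ i, n = A i := by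
  intro n
  induction n using Nat.strong_induction_on with
  | _ n ih =>
    intro h
    rcases Nat.lt_or_ge n 2 with hn | hn
    · interval_cases n
      · exact ⟨0, rfl⟩
      · exact ⟨1, by rw [show A 1 = psi (A 0) + 1 from rfl, show A 0 = 0 from rfl, psi_zero]⟩
    · obtain ⟨m, hmn, hpal, hne⟩ := pal_down hn h
      obtain ⟨i, rfl⟩ := ih m hmn hpal
      exact ⟨i + 1, hne⟩

end FibAux

/-- The length-n prefix of the Fibonacci word is a palindrome iff
n = F_i − 2 for some i ≥ 3. -/
theorem fibWord_palindromic_prefixes :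
    ∀ n : ℕ, (fibPrefix n).reverse = fibPrefix n ↔ ∃ i : ℕ, 3 ≤ i ∧ n + 2 = Nat.fib i := by
  intro n
  constructor
  · intro h
    obtain ⟨i, rfl⟩ := FibAux.pal_to_A n h
    exact ⟨i + 3, by omega, FibAux.A_fib i⟩
  · rintro ⟨i, hi, hn⟩
    have hA := FibAux.A_fib (i - 3)
    rw [show i - 3 + 3 = i by omega, ← hn] at hA
    have : n = FibAux.A (i - 3) := by omega
    rw [this]
    exact FibAux.A_pal _
end
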